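/- Let (Ω, F, P) be a probability space carrying, for each j ≥ 1, a random variable U_j uniform on (0,1), independent of a σ-algebra K and of each other, and let N be a K-measurable random variable with values in ℕ ∪ {∞}. Define ξ = 1{U_N ≤ p} on the event {1 ≤ N < ∞}. Then P(ξ = 1 | K) = p almost surely on the event {1 ≤ N < ∞}. -/

import Mathlib

open MeasureTheory ProbabilityTheory

/-- Regeneration at reset times (abstract form of Proposition 1): if `U₁, U₂, …`
are i.i.d. uniform-(0,1) random variables independent of a σ-algebra `K`, `N` is a
`K`-measurable random variable with values in `ℕ ∪ {∞}`, and `ξ = 1{U_N ≤ p}` on the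
event `{1 ≤ N < ∞}`, then `P(ξ = 1 | K) = p` almost surely on `{1 ≤ N < ∞}`. -/
theorem stmt_6 {Ω : Type*} (K : MeasurableSpace Ω) {m0 : MeasurableSpace Ω} (μ : Measure Ω)
    [IsProbabilityMeasure μ] (p : ℝ) (hp0 : 0 ≤ p) (hp1 : p ≤ 1)
    (hK : K ≤ m0)
    (U : ℕ → Ω → ℝ) (hUmeas : ∀ j, Measurable (U j))
    (hUunif : ∀ j, ∀ a b : ℝ, 0 ≤ a → a ≤ b → b ≤ 1 →
      (μ {ω | a ≤ U j ω ∧ U j ω ≤ b}).toReal = b - a)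
    (hUindep : iIndepFun U μ)
    (hUK : Indep K (MeasurableSpace.comap (fun ω (j : ℕ) => U j ω) inferInstance) μ)
    (N : Ω → ℕ∞) (hNmeas : Measurable[K] N)
    (ξ : Ω → ℕ) (hξmeas : Measurable ξ)
    (hξ : ∀ (ω : Ω) (k : ℕ), 1 ≤ k → N ω = (k : ℕ∞) →
      ξ ω = if U k ω ≤ p then 1 else 0) :
    ∀ᵐ ω ∂μ, (1 ≤ N ω ∧ N ω ≠ ⊤) →
      (μ[Set.indicator {ω' | ξ ω' = 1} (fun _ => (1 : ℝ)) | K]) ω = p := by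
  have hmU_le : MeasurableSpace.comap (fun ω (j : ℕ) => U j ω) inferInstance ≤ m0 :=
    le_trans (measurable_pi_iff.mpr hUmeas).comap_le le_rfl
  set f : Ω → ℝ := Set.indicator {ω' | ξ ω' = 1} (fun _ => (1 : ℝ)) with hf
  have hξset : MeasurableSet {ω' | ξ ω' = 1} := hξmeas (measurableSet_singleton 1)
  have hf_int : Integrable f μ :=
    (integrable_const (μ := μ) (1 : ℝ)).indicator
      hξset
  -- probability that U k ≤ p is p
  have hprob : ∀ k : ℕ, (μ {ω | U k ω ≤ p}).toReal = p := by
    intro k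
    have h01 : μ {ω | 0 ≤ U k ω ∧ U k ω ≤ 1} = 1 := by
      have := hUunif k 0 1 le_rfl zero_le_one le_rfl
      rw [show (1:ℝ) - 0 = 1 by ring] at this
      exact (ENNReal.toReal_eq_one_iff _).mp this
    have hneg : μ {ω | U k ω < 0} = 0 := by
      have hsub : {ω | U k ω < 0} ⊆ {ω | 0 ≤ U k ω ∧ U k ω ≤ 1}ᶜ := by
        intro ω hω h; exact absurd h.1 (not_le.mpr hω)
      have hc : μ ({ω | 0 ≤ U k ω ∧ U k ω ≤ 1}ᶜ) = 0 := by
        have hms : MeasurableSet {ω | 0 ≤ U k ω ∧ U k ω ≤ 1} :=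
          (hUmeas k measurableSet_Ici).inter (hUmeas k measurableSet_Iic)
        have := prob_compl_eq_one_sub (μ := μ) hms
        rw [h01] at this; simpa using this
      exact measure_mono_null hsub hc
    have heq : μ {ω | U k ω ≤ p} = μ {ω | 0 ≤ U k ω ∧ U k ω ≤ p} := by
      apply le_antisymm
      · calc μ {ω | U k ω ≤ p}
            ≤ μ ({ω | 0 ≤ U k ω ∧ U k ω ≤ p} ∪ {ω | U k ω < 0}) := by
              apply measure_mono; intro ω hω
              rcases le_or_gt 0 (U k ω) with h | h
              · exact Or.inl ⟨h, hω⟩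
              · exact Or.inr h
          _ ≤ μ {ω | 0 ≤ U k ω ∧ U k ω ≤ p} + μ {ω | U k ω < 0} := measure_union_le _ _
          _ = μ {ω | 0 ≤ U k ω ∧ U k ω ≤ p} := by rw [hneg, add_zero]
      · exact measure_mono fun ω hω => hω.2
    rw [heq, hUunif k 0 p le_rfl hp0 hp1, sub_zero]
  -- main per-k statement
  have hmain : ∀ k : ℕ, ∀ᵐ ω ∂μ, (1 ≤ k ∧ N ω = (k : ℕ∞)) → (μ[f|K]) ω = p := by
    intro k
    by_cases hk : 1 ≤ k
    swap
    · filter_upwards with ω h; exact absurd h.1 hk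
    set B : Set Ω := {ω | N ω = (k : ℕ∞)} with hB
    have hBmeas : MeasurableSet[K] B := hNmeas (measurableSet_singleton _)
    set S : Set Ω := {ω | U k ω ≤ p} with hS
    have hSmU : MeasurableSet[MeasurableSpace.comap (fun ω (j : ℕ) => U j ω) inferInstance] S :=
      ⟨(fun x : ℕ → ℝ => x k) ⁻¹' Set.Iic p,
        (measurable_pi_apply k) measurableSet_Iic, rfl⟩
    have hSmeas : MeasurableSet[m0] S := (hUmeas k measurableSet_Iic)
    set g : Ω → ℝ := Set.indicator S (fun _ => (1 : ℝ)) with hg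
    have hg_sm : StronglyMeasurable[MeasurableSpace.comap
        (fun ω (j : ℕ) => U j ω) inferInstance] g :=
      stronglyMeasurable_const.indicator hSmU
    have hg_int : Integrable g μ :=
      (integrable_const (μ := μ) (1 : ℝ)).indicator
        hSmeas
    have hfg : B.indicator f = B.indicator g := by
      funext ω
      by_cases hω : ω ∈ B
      · rw [Set.indicator_of_mem hω, Set.indicator_of_mem hω]
        have hξω := hξ ω k hk hω
        rw [hf, hg]
        by_cases hU : U k ω ≤ p
        · rw [Set.indicator_of_mem (by exact hU : ω ∈ S),
            Set.indicator_of_mem (by simp [hξω, hU] : ω ∈ {ω' | ξ ω' = 1})]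
        · rw [Set.indicator_of_notMem (by exact hU : ω ∉ S),
            Set.indicator_of_notMem (by simp [hξω, hU] : ω ∉ {ω' | ξ ω' = 1})]
      · rw [Set.indicator_of_notMem hω, Set.indicator_of_notMem hω]
    have hEg : ∫ ω, g ω ∂μ = p := by
      have h := @MeasureTheory.integral_indicator_const Ω ℝ m0 _ _ μ _ (1 : ℝ) S hSmeas
      rw [hg, h, smul_eq_mul, mul_one]
      exact hprob k
    have hcond_g : μ[g|K] =ᵐ[μ] fun _ => p := by
      have := condExp_indep_eq hmU_le hK hg_sm hUK.symm
      rw [hEg] at this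
      exact this
    have h1 : B.indicator (μ[f|K]) =ᵐ[μ] B.indicator (μ[g|K]) := by
      calc B.indicator (μ[f|K])
          =ᵐ[μ] μ[B.indicator f|K] := (condExp_indicator hf_int hBmeas).symm
        _ = μ[B.indicator g|K] := by rw [hfg]
        _ =ᵐ[μ] B.indicator (μ[g|K]) := condExp_indicator hg_int hBmeas
    have h2 : B.indicator (μ[g|K]) =ᵐ[μ] B.indicator (fun _ => p) := by
      filter_upwards [hcond_g] with ω hω
      simp only [Set.indicator_apply, hω]
    filter_upwards [h1.trans h2] with ω hω hNB
    have hωB : ω ∈ B := hNB.2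
    rw [← Set.indicator_of_mem hωB (μ[f|K]), hω, Set.indicator_of_mem hωB]
  have hmain' := (MeasureTheory.ae_all_iff).mpr hmain
  filter_upwards [hmain'] with ω hω ⟨h1, h2⟩
  obtain ⟨k, hk⟩ := WithTop.ne_top_iff_exists.mp h2
  have hk1 : 1 ≤ k := by
    rcases Nat.eq_zero_or_pos k with h | h
    · subst h; rw [← hk] at h1; simp at h1; exact (ENat.one_le_iff_ne_zero.mp h1 rfl).elim
    · exact h
  exact hω k ⟨hk1, hk.symm⟩
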